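/- Let s = 12, m ≥ 1, and consider the two-sided local trigonometric regression design X of size (2sm+1) × 12 whose rows for j = −sm, ..., sm are (1, cos(πj/6), sin(πj/6), ..., cos(5πj/6), sin(5πj/6), cos(πj)), and x_0 the row at j = 0. Then w_q = X (X' X)^{-1} x_0 has entries w_{qj} = 1/(2m+1) for j ≡ 0 (mod 12), |j| ≤ 12m, and w_{qj} = 0 otherwise. -/

import Mathlib

open Real Matrix

noncomputable def XTwoSided (m : ℕ) : Matrix (Fin (2 * (12 * m) + 1)) (Fin 12) ℝ :=
  fun i c =>
    let j : ℝ := ((i.val : ℤ) - (12 * m : ℕ) : ℤ)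
    if c.val = 0 then 1
    else if c.val = 11 then Real.cos (π * j)
    else if c.val % 2 = 1 then Real.cos (π * (((c.val + 1) / 2 : ℕ) : ℝ) * j / 6)
    else Real.sin (π * (((c.val / 2 : ℕ)) : ℝ) * j / 6)

/-!
The weights `w = X (XᵀX)⁻¹ x₀` are the unique vector in the column space of `X` solving the
normal equations `Xᵀ w = x₀`, as soon as `X` has full column rank. The equally weighted filter `v`
on the lags `j ≡ 0 (mod 12)` has both properties: it lies in the column space because the
indicator of `12ℤ` is the trigonometric polynomial `(1/12) ∑_{k<12} cos (2πkj/12)`, and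
`Xᵀ v = x₀` because each of the `2m + 1` rows with `12 ∣ j` equals `x₀`. Full column rank holds
because for `m ≥ 1` the window contains a full period, on which the twelve columns are orthogonal
and nonzero.
-/

open Finset

noncomputable def dvdIndicator (n : ℕ) (t : ℤ) : ℝ := if (n : ℤ) ∣ t then n else 0

section PeriodSums

variable {n : ℕ} [NeZero n]

theorem sum_range_exp_two_pi_mul_I (t : ℤ) :
    ∑ j ∈ range n, Complex.exp (2 * π * Complex.I * t * j / n) =
      (dvdIndicator n t : ℂ) := by
  have hζ := Complex.isPrimitiveRoot_exp n (NeZero.ne n)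
  set ζ := Complex.exp (2 * π * Complex.I / n)
  set z := ζ ^ t
  have hpow (j : ℕ) : Complex.exp (2 * π * Complex.I * t * j / n) = z ^ j := by
    rw [← zpow_natCast, ← _root_.zpow_mul, ← Complex.exp_int_mul]
    push_cast; ring_nf
  simp_rw [hpow, dvdIndicator]
  split_ifs with h
  · have hz : z = 1 := (hζ.zpow_eq_one_iff_dvd t).mpr h
    simp [hz]
  · have hz : z ≠ 1 := mt (hζ.zpow_eq_one_iff_dvd t).mp h
    have hzn : z ^ n = 1 := by
      rw [← zpow_natCast, ← _root_.zpow_mul, mul_comm, _root_.zpow_mul, zpow_natCast,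
        hζ.pow_eq_one, _root_.one_zpow]
    rw [geom_sum_eq hz, hzn, sub_self, zero_div, Complex.ofReal_zero]

theorem sum_range_cos_two_pi_mul (t : ℤ) :
    ∑ j ∈ range n, cos (2 * π * t * j / n) = dvdIndicator n t := by
  have h := congrArg Complex.re (sum_range_exp_two_pi_mul_I (n := n) t)
  rw [Complex.re_sum] at h
  convert h using 2
  · rw [← Complex.exp_ofReal_mul_I_re]; push_cast; ring_nf
  · exact (Complex.ofReal_re _).symm

theorem sum_range_sin_two_pi_mul (t : ℤ) :
    ∑ j ∈ range n, sin (2 * π * t * j / n) = 0 := by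
  have h := congrArg Complex.im (sum_range_exp_two_pi_mul_I (n := n) t)
  rw [Complex.im_sum] at h
  convert h using 2
  · rw [← Complex.exp_ofReal_mul_I_im]; push_cast; ring_nf
  · exact (Complex.ofReal_im _).symm

theorem cos_two_pi_mul_sub_div (j : ℤ) (k : ℝ) :
    cos (2 * π * j * (n - k) / n) = cos (2 * π * j * k / n) := by
  rw [← cos_int_mul_two_pi_sub _ j]
  congr 1
  field_simp [NeZero.ne n]
  ring

theorem sum_range_cos_mul_cos (a b : ℤ) :
    ∑ j ∈ range n, cos (2 * π * a * j / n) * cos (2 * π * b * j / n) =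
      (dvdIndicator n (a - b) + dvdIndicator n (a + b)) / 2 := by
  have h (j : ℕ) : cos (2 * π * a * j / n) * cos (2 * π * b * j / n) =
      (cos (2 * π * ↑(a - b) * j / n) + cos (2 * π * ↑(a + b) * j / n)) / 2 := by
    rw [eq_div_iff two_ne_zero, mul_comm, ← mul_assoc, two_mul_cos_mul_cos]
    push_cast; ring_nf
  simp_rw [h, ← sum_div, sum_add_distrib, sum_range_cos_two_pi_mul]

theorem sum_range_sin_mul_sin (a b : ℤ) :
    ∑ j ∈ range n, sin (2 * π * a * j / n) * sin (2 * π * b * j / n) =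
      (dvdIndicator n (a - b) - dvdIndicator n (a + b)) / 2 := by
  have h (j : ℕ) : sin (2 * π * a * j / n) * sin (2 * π * b * j / n) =
      (cos (2 * π * ↑(a - b) * j / n) - cos (2 * π * ↑(a + b) * j / n)) / 2 := by
    rw [eq_div_iff two_ne_zero, mul_comm, ← mul_assoc, two_mul_sin_mul_sin]
    push_cast; ring_nf
  simp_rw [h, ← sum_div, sum_sub_distrib, sum_range_cos_two_pi_mul]

theorem sum_range_sin_mul_cos (a b : ℤ) :
    ∑ j ∈ range n, sin (2 * π * a * j / n) * cos (2 * π * b * j / n) = 0 := by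
  have h (j : ℕ) : sin (2 * π * a * j / n) * cos (2 * π * b * j / n) =
      (sin (2 * π * ↑(a - b) * j / n) + sin (2 * π * ↑(a + b) * j / n)) / 2 := by
    rw [eq_div_iff two_ne_zero, mul_comm, ← mul_assoc, two_mul_sin_mul_cos]
    push_cast; ring_nf
  simp_rw [h, ← sum_div, sum_add_distrib, sum_range_sin_two_pi_mul, add_zero, zero_div]

end PeriodSums

theorem Matrix.inv_transpose_mul_self_mulVec_transpose_mulVec {m n R : Type*} [Fintype m]
    [Fintype n] [DecidableEq n] [Field R] [LinearOrder R] [IsStrictOrderedRing R]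
    {X : Matrix m n R} (hX : Function.Injective X.mulVec) (u : n → R) :
    (Xᵀ * X)⁻¹ *ᵥ (Xᵀ *ᵥ (X *ᵥ u)) = u := by
  have hinj : Function.Injective (Xᵀ * X).mulVec := by
    have hker : LinearMap.ker (Xᵀ * X).mulVecLin = ⊥ := by
      rw [ker_mulVecLin_transpose_mul_self]
      exact LinearMap.ker_eq_bot.mpr hX
    exact LinearMap.ker_eq_bot.mp hker
  have hunit : IsUnit (Xᵀ * X).det :=
    (isUnit_iff_isUnit_det _).mp (mulVec_injective_iff_isUnit.mp hinj)
  rw [mulVec_mulVec, mulVec_mulVec, Matrix.mul_assoc, nonsing_inv_mul _ hunit, one_mulVec]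

namespace XTwoSided

def IsCosColumn (c : Fin 12) : Prop := c.val = 0 ∨ c.val % 2 = 1

instance : DecidablePred IsCosColumn := fun _ => inferInstanceAs (Decidable (_ ∨ _))

def freq (c : Fin 12) : ℤ := ((c.val + c.val % 2) / 2 : ℕ)

noncomputable def trigRow (j : ℤ) (c : Fin 12) : ℝ :=
  if IsCosColumn c then cos (2 * π * freq c * j / 12)
  else sin (2 * π * freq c * j / 12)

theorem apply_eq_trigRow (m : ℕ) (i : Fin (2 * (12 * m) + 1)) (c : Fin 12) :
    XTwoSided m i c = trigRow ((i : ℤ) - (12 * m : ℕ)) c := by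
  fin_cases c <;> (simp only [XTwoSided, trigRow, IsCosColumn, freq]; norm_num) <;> ring_nf

theorem trigRow_of_dvd {j : ℤ} (hj : (12 : ℤ) ∣ j) : trigRow j = trigRow 0 := by
  obtain ⟨k, rfl⟩ := hj
  ext c
  have hcos : cos (2 * π * freq c * ↑(12 * k) / 12) = 1 := by
    rw [← cos_int_mul_two_pi (freq c * k)]; push_cast; ring_nf
  have hsin : sin (2 * π * freq c * ↑(12 * k) / 12) = 0 := by
    rw [← sin_int_mul_pi (2 * freq c * k)]; push_cast; ring_nf
  simp only [trigRow, hcos, hsin, Int.cast_zero, mul_zero, zero_div, cos_zero, sin_zero]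

theorem not_dvd_freq_sub_and_add_of_ne {c c' : Fin 12} (h : IsCosColumn c ↔ IsCosColumn c')
    (hne : c ≠ c') : ¬ 12 ∣ freq c - freq c' ∧ ¬ 12 ∣ freq c + freq c' := by
  revert c c'; decide

theorem dvd_freq_add_self_iff (c : Fin 12) :
    12 ∣ freq c + freq c ↔ c = 0 ∨ c = 11 := by
  revert c; decide

def periodGram (c : Fin 12) : ℝ := if c = 0 ∨ c = 11 then 12 else 6

noncomputable def periodDesign : Matrix (Fin 12) (Fin 12) ℝ := of fun j c => trigRow j c

theorem periodDesign_transpose_mul_self :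
    periodDesignᵀ * periodDesign = diagonal periodGram := by
  ext c c'
  have hsum : (periodDesignᵀ * periodDesign) c c' =
      ∑ j ∈ range 12, trigRow j c * trigRow j c' := by
    simp only [mul_apply, transpose_apply, periodDesign, of_apply]
    exact Fin.sum_univ_eq_sum_range (fun j => trigRow j c * trigRow j c') 12
  have hcc := sum_range_cos_mul_cos (n := 12)
  have hss := sum_range_sin_mul_sin (n := 12)
  have hsc := sum_range_sin_mul_cos (n := 12)
  simp only [Nat.cast_ofNat] at hcc hss hsc
  rw [hsum, diagonal_apply]
  simp only [trigRow, Int.cast_natCast]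
  rcases eq_or_ne c c' with rfl | hne
  · by_cases hcos : IsCosColumn c
    · simp only [hcos, if_true, hcc, dvdIndicator, sub_self, dvd_zero, Nat.cast_ofNat,
        dvd_freq_add_self_iff, periodGram]
      split_ifs <;> norm_num
    · have h011 : ¬ (c = 0 ∨ c = 11) := by rintro (rfl | rfl) <;> exact hcos (by decide)
      simp only [hcos, if_false, hss, dvdIndicator, sub_self, dvd_zero, Nat.cast_ofNat,
        dvd_freq_add_self_iff, periodGram, h011]
      norm_num
  · have hoff := fun h => not_dvd_freq_sub_and_add_of_ne h hne
    by_cases hcos : IsCosColumn c <;> by_cases hcos' : IsCosColumn c' <;>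
      simp [hcos, hcos', hcc, hss, hsc, mul_comm (cos _) (sin _), dvdIndicator, hne, hoff]

theorem periodDesign_mulVec_injective : Function.Injective periodDesign.mulVec := by
  have hgram : Function.Injective (periodDesignᵀ * periodDesign).mulVec := by
    rw [periodDesign_transpose_mul_self, mulVec_injective_iff_isUnit, isUnit_diagonal,
      Pi.isUnit_iff]
    intro c
    unfold periodGram
    split_ifs <;> norm_num
  refine Function.Injective.of_comp (f := periodDesignᵀ.mulVec) ?_
  simpa only [Function.comp_def, mulVec_mulVec] using hgram

theorem mulVec_injective {m : ℕ} (hm : 1 ≤ m) : Function.Injective (XTwoSided m).mulVec := by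
  intro x y h
  apply periodDesign_mulVec_injective
  funext j
  have hj := congrFun h ⟨12 * m + j, by omega⟩
  simpa [mulVec, dotProduct, periodDesign, apply_eq_trigRow] using hj

noncomputable def combCoeffs (c : Fin 12) : ℝ :=
  (if IsCosColumn c then (if c = 0 ∨ c = 11 then 1 else 2) else 0) / 12

-- Pairing the frequencies `k` and `12 - k` folds `∑_{k<12} cos (2πkj/12)` onto the columns.
theorem trigRow_dotProduct_combCoeffs (j : ℤ) :
    trigRow j ⬝ᵥ combCoeffs = if (12 : ℤ) ∣ j then 1 else 0 := by
  have h := sum_range_cos_two_pi_mul (n := 12) j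
  have r := cos_two_pi_mul_sub_div (n := 12) j
  simp only [Finset.sum_range_succ, Finset.sum_range_zero, Nat.cast_ofNat, dvdIndicator] at h r
  have r1 := r 1; have r2 := r 2; have r3 := r 3; have r4 := r 4; have r5 := r 5
  simp only [dotProduct, Fin.sum_univ_succ, Fin.sum_univ_zero, trigRow, combCoeffs]
  norm_num [IsCosColumn, freq, Fin.ext_iff] at h ⊢
  ring_nf at h r1 r2 r3 r4 r5 ⊢
  rw [r1, r2, r3, r4, r5] at h
  split_ifs at h ⊢ <;> linarith

noncomputable def seasonalFilter (m : ℕ) (i : Fin (2 * (12 * m) + 1)) : ℝ :=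
  if (12 : ℤ) ∣ ((i.val : ℤ) - (12 * m : ℕ)) then 1 / (2 * (m : ℝ) + 1) else 0

theorem mulVec_combCoeffs (m : ℕ) :
    XTwoSided m *ᵥ ((2 * (m : ℝ) + 1)⁻¹ • combCoeffs) = seasonalFilter m := by
  funext i
  rw [mulVec_smul, Pi.smul_apply, mulVec, seasonalFilter]
  simp only [funext (apply_eq_trigRow m i), trigRow_dotProduct_combCoeffs]
  split_ifs <;> simp

theorem card_filter_twelve_dvd (m : ℕ) :
    #{i : Fin (2 * (12 * m) + 1) | (12 : ℤ) ∣ ((i.val : ℤ) - (12 * m : ℕ))} = 2 * m + 1 := by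
  rw [← card_range (2 * m + 1), eq_comm]
  refine card_bij (fun k hk => ⟨12 * k, by simp at hk; omega⟩) ?_ ?_ ?_
  · intro k hk; simp; omega
  · intro a _ b _ h; simpa [Fin.ext_iff] using h
  · intro i hi
    simp only [mem_filter, mem_univ, true_and] at hi
    exact ⟨i / 12, by simp; omega, by ext; simp; omega⟩

theorem transpose_mulVec_seasonalFilter (m : ℕ) :
    (XTwoSided m)ᵀ *ᵥ seasonalFilter m = trigRow 0 := by
  funext c
  have hterm (i : Fin (2 * (12 * m) + 1)) : XTwoSided m i c * seasonalFilter m i =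
      if (12 : ℤ) ∣ ((i.val : ℤ) - (12 * m : ℕ)) then trigRow 0 c / (2 * m + 1) else 0 := by
    rw [seasonalFilter, apply_eq_trigRow]
    split_ifs with h
    · rw [trigRow_of_dvd h, mul_one_div]
    · rw [mul_zero]
  simp only [mulVec, dotProduct, transpose_apply, hterm, sum_ite, sum_const_zero, add_zero,
    sum_const, card_filter_twelve_dvd, nsmul_eq_mul]
  push_cast
  field_simp

end XTwoSided

theorem two_sided_climate_normal_filter (m : ℕ) (hm : 1 ≤ m) :
    let X := XTwoSided m
    let x0 : Fin 12 → ℝ := fun c => X ⟨12 * m, by omega⟩ c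
    let wq : Fin (2 * (12 * m) + 1) → ℝ := X *ᵥ ((Xᵀ * X)⁻¹ *ᵥ x0)
    ∀ i : Fin (2 * (12 * m) + 1),
      wq i = if (12 : ℤ) ∣ ((i.val : ℤ) - (12 * m : ℕ)) then 1 / (2 * (m : ℝ) + 1) else 0 := by
  intro X x0 wq i
  set u : Fin 12 → ℝ := (2 * (m : ℝ) + 1)⁻¹ • XTwoSided.combCoeffs
  have hfit : X *ᵥ u = XTwoSided.seasonalFilter m := XTwoSided.mulVec_combCoeffs m
  have hnormal : x0 = Xᵀ *ᵥ (X *ᵥ u) := by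
    rw [hfit, XTwoSided.transpose_mulVec_seasonalFilter]
    funext c
    simp [x0, X, XTwoSided.apply_eq_trigRow]
  show (X *ᵥ ((Xᵀ * X)⁻¹ *ᵥ x0)) i = XTwoSided.seasonalFilter m i
  rw [hnormal, inv_transpose_mul_self_mulVec_transpose_mulVec (XTwoSided.mulVec_injective hm),
    hfit]
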